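/- Let B₀ be a p×n matrix and X an m×p matrix, with NB₀ = N U D V' the generalized SVD under metric M = X'X = N'N (U'MU = I_r, V'V = I_r, D diagonal r×r). Let B_k = U_k D_k V_k' retain the k largest generalized singular values. Then ‖XB₀ − XB_k‖_F² = Σ_{j>k} dⱼ²(XB₀). -/

import Mathlib

open Matrix MeasureTheory

/-- List of singular values of a real matrix, sorted in decreasing order
(square roots of the eigenvalues of `Aᵀ * A`). -/
noncomputable def svList {m n : ℕ} (A : Matrix (Fin m) (Fin n) ℝ) : List ℝ :=
  (((List.ofFn (show (Aᵀ * A).IsHermitian by simpa using Matrix.isHermitian_conjTranspose_mul_self A).eigenvalues).map Real.sqrt).mergeSort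
    (fun a b => decide (b ≤ a)))

/-- `sv A k` is the `k`-th largest singular value of `A` (1-indexed); `0` if `k` exceeds
the number of singular values. -/
noncomputable def sv {m n : ℕ} (A : Matrix (Fin m) (Fin n) ℝ) (k : ℕ) : ℝ :=
  (svList A).getD (k - 1) 0

/-- Nuclear norm: sum of the singular values. -/
noncomputable def nuclearNorm {m n : ℕ} (A : Matrix (Fin m) (Fin n) ℝ) : ℝ :=
  (svList A).sum

/-- Squared Frobenius norm. -/
noncomputable def frobSq {m n : ℕ} (A : Matrix (Fin m) (Fin n) ℝ) : ℝ :=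
  ∑ i, ∑ j, (A i j) ^ 2

/-- Frobenius inner product. -/
noncomputable def frobInner {m n : ℕ} (C D : Matrix (Fin m) (Fin n) ℝ) : ℝ :=
  ∑ i, ∑ j, C i j * D i j

/-!
Since `XᵀX = NᵀN`, the GSVD identity `N B₀ = N (U D Vᵀ)` forces `X B₀ = X U D Vᵀ`, and
`Uᵀ XᵀX U = 1` gives `(X U E Vᵀ)ᵀ (X U E Vᵀ) = V E² Vᵀ` for every diagonal `E`.
With `VᵀV = 1`, taking traces shows that the squared Frobenius norm of `X U E Vᵀ` is `∑ eⱼ²`;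
for the tail `E = D - D_k` this is the left-hand side. Swapping the factors of `V (D² Vᵀ)`
shows that the Gram matrix of `X B₀` has eigenvalues `dⱼ²` padded with `n - r` zeros, so the
singular values of `X B₀` are `d₁ ≥ ⋯ ≥ d_r, 0, …, 0`, and the right-hand side is the same sum.
-/

open Polynomial

section GSVD

variable {l n p q r : Type*}

theorem mul_eq_mul_of_transpose_mul_self_eq [Fintype l] [Fintype p] [Fintype q]
    {X : Matrix l p ℝ} {N : Matrix q p ℝ} (hN : Xᵀ * X = Nᵀ * N) {A B : Matrix p n ℝ}
    (h : N * A = N * B) : X * A = X * B := by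
  have hNC : N * (A - B) = 0 := by rw [Matrix.mul_sub, h, sub_self]
  have hgram : (X * (A - B))ᴴ * (X * (A - B)) = 0 := by
    rw [conjTranspose_eq_transpose_of_trivial]
    calc (X * (A - B))ᵀ * (X * (A - B)) = (A - B)ᵀ * (Xᵀ * X) * (A - B) := by
          simp only [transpose_mul, Matrix.mul_assoc]
      _ = (N * (A - B))ᵀ * (N * (A - B)) := by
          rw [hN]; simp only [transpose_mul, Matrix.mul_assoc]
      _ = 0 := by rw [hNC, transpose_zero, Matrix.zero_mul]
  rw [← sub_eq_zero, ← Matrix.mul_sub]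
  exact conjTranspose_mul_self_eq_zero.mp hgram

theorem transpose_mul_self_of_mul_diagonal_mul_transpose [Fintype l] [Fintype p] [Fintype r]
    [DecidableEq r] {X : Matrix l p ℝ} {U : Matrix p r ℝ}
    (hU : Uᵀ * (Xᵀ * X) * U = 1) (V : Matrix n r ℝ) (e : r → ℝ) :
    (X * (U * diagonal e * Vᵀ))ᵀ * (X * (U * diagonal e * Vᵀ))
      = V * diagonal (fun j => e j ^ 2) * Vᵀ :=
  calc (X * (U * diagonal e * Vᵀ))ᵀ * (X * (U * diagonal e * Vᵀ))
      = V * diagonal e * (Uᵀ * (Xᵀ * X) * U) * diagonal e * Vᵀ := by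
        simp only [transpose_mul, diagonal_transpose, transpose_transpose, Matrix.mul_assoc]
    _ = V * diagonal (fun j => e j ^ 2) * Vᵀ := by
        rw [hU, Matrix.mul_one, Matrix.mul_assoc V, diagonal_mul_diagonal]
        simp only [sq]

theorem card_le_of_transpose_mul_self_eq_one [Fintype n] [Fintype r] [DecidableEq r]
    {V : Matrix n r ℝ} (hV : Vᵀ * V = 1) :
    Fintype.card r ≤ Fintype.card n :=
  calc Fintype.card r = (Vᵀ * V).rank := by rw [hV, rank_one]
    _ ≤ Vᵀ.rank := rank_mul_le_left _ _
    _ ≤ Fintype.card n := rank_le_card_width _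

theorem roots_charpoly_mul_diagonal_mul_transpose [Fintype n] [Fintype r] [DecidableEq n]
    [DecidableEq r] {V : Matrix n r ℝ} (hV : Vᵀ * V = 1) (c : r → ℝ) :
    (V * diagonal c * Vᵀ).charpoly.roots
      = Finset.univ.val.map c + Multiset.replicate (Fintype.card n - Fintype.card r) 0 := by
  have hVDV : diagonal c * Vᵀ * V = diagonal c := by rw [Matrix.mul_assoc, hV, Matrix.mul_one]
  rw [Matrix.mul_assoc, charpoly_mul_comm_of_le _ _ (card_le_of_transpose_mul_self_eq_one hV),
    hVDV, roots_mul (mul_ne_zero (pow_ne_zero _ X_ne_zero) (charpoly_monic _).ne_zero),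
    roots_X_pow, charpoly_diagonal,
    roots_prod _ _ (monic_prod_of_monic _ _ fun i _ => monic_X_sub_C (c i)).ne_zero]
  simp [Multiset.nsmul_singleton, add_comm]

end GSVD

theorem svList_eq_of_roots_charpoly {m n : ℕ} {A : Matrix (Fin m) (Fin n) ℝ} {s : List ℝ}
    (hs0 : ∀ x ∈ s, 0 ≤ x) (hs : s.Pairwise (· ≥ ·))
    (hroots : (Aᵀ * A).charpoly.roots = (s.map (· ^ 2) : Multiset ℝ)) : svList A = s := by
  have hA : (Aᵀ * A).IsHermitian := by simpa using isHermitian_conjTranspose_mul_self A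
  have heig : (List.ofFn hA.eigenvalues : Multiset ℝ) = s.map (· ^ 2) := by
    rw [← hroots, hA.roots_charpoly_eq_eigenvalues, Fin.univ_val_map]
    simp
  have hsqrt : (s.map (· ^ 2)).map Real.sqrt = s := by
    rw [List.map_map]
    conv_rhs => rw [← List.map_id s]
    exact List.map_congr_left fun x hx => Real.sqrt_sq (hs0 x hx)
  have hperm : ((List.ofFn hA.eigenvalues).map Real.sqrt).Perm s := by
    rw [← hsqrt]
    exact (Multiset.coe_eq_coe.mp heig).map _
  have hsorted : (svList A).Pairwise (· ≥ ·) :=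
    (List.pairwise_mergeSort (fun a b c hab hbc => by simp_all; linarith)
      (fun a b => by simpa using le_total b a) _).imp of_decide_eq_true
  exact ((List.mergeSort_perm _ _).trans hperm).eq_of_pairwise' hsorted hs

theorem svList_mul_diagonal_mul_transpose {m n p r : ℕ} {X : Matrix (Fin m) (Fin p) ℝ}
    {U : Matrix (Fin p) (Fin r) ℝ} {V : Matrix (Fin n) (Fin r) ℝ}
    (hU : Uᵀ * (Xᵀ * X) * U = 1) (hV : Vᵀ * V = 1) {d : Fin r → ℝ}
    (hd0 : ∀ j, 0 ≤ d j) (hd : Antitone d) :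
    svList (X * (U * diagonal d * Vᵀ)) = List.ofFn d ++ List.replicate (n - r) 0 := by
  apply svList_eq_of_roots_charpoly
  · simp only [List.mem_append, List.mem_ofFn, List.mem_replicate]
    rintro x (⟨j, rfl⟩ | ⟨-, rfl⟩)
    exacts [hd0 j, le_rfl]
  · simp only [List.pairwise_append, List.pairwise_ofFn, List.pairwise_replicate, List.mem_ofFn,
      List.mem_replicate]
    refine ⟨fun i j hij => hd hij.le, by simp, ?_⟩
    rintro _ ⟨j, rfl⟩ _ ⟨-, rfl⟩
    exact hd0 j
  · rw [transpose_mul_self_of_mul_diagonal_mul_transpose hU,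
      roots_charpoly_mul_diagonal_mul_transpose hV]
    simp [Fin.univ_val_map, List.map_ofFn, Function.comp_def, ← Multiset.coe_replicate]

theorem getD_append_replicate_self {α : Type*} (l : List α) (a : α) (k i : ℕ) :
    (l ++ List.replicate k a).getD i a = l.getD i a := by
  grind

theorem sv_mul_diagonal_mul_transpose {m n p r : ℕ} {X : Matrix (Fin m) (Fin p) ℝ}
    {U : Matrix (Fin p) (Fin r) ℝ} {V : Matrix (Fin n) (Fin r) ℝ}
    (hU : Uᵀ * (Xᵀ * X) * U = 1) (hV : Vᵀ * V = 1) {d : Fin r → ℝ}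
    (hd0 : ∀ j, 0 ≤ d j) (hd : Antitone d) (j : ℕ) :
    sv (X * (U * diagonal d * Vᵀ)) j = (List.ofFn d).getD (j - 1) 0 := by
  rw [sv, svList_mul_diagonal_mul_transpose hU hV hd0 hd, getD_append_replicate_self]

theorem frobSq_eq_trace {m n : ℕ} (A : Matrix (Fin m) (Fin n) ℝ) :
    frobSq A = (Aᵀ * A).trace := by
  rw [frobSq, trace, Finset.sum_comm]
  simp [mul_apply, sq]

theorem frobSq_mul_diagonal_mul_transpose {m n p r : ℕ} {X : Matrix (Fin m) (Fin p) ℝ}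
    {U : Matrix (Fin p) (Fin r) ℝ} {V : Matrix (Fin n) (Fin r) ℝ}
    (hU : Uᵀ * (Xᵀ * X) * U = 1) (hV : Vᵀ * V = 1) (e : Fin r → ℝ) :
    frobSq (X * (U * diagonal e * Vᵀ)) = ∑ j, e j ^ 2 := by
  rw [frobSq_eq_trace, transpose_mul_self_of_mul_diagonal_mul_transpose hU, trace_mul_cycle, hV,
    Matrix.one_mul, trace_diagonal]

theorem sum_sq_ite_lt_eq_sum_Icc_sq_getD {r n : ℕ} (hrn : r ≤ n) (d : Fin r → ℝ) (k : ℕ) :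
    ∑ j : Fin r, (if (j : ℕ) < k then 0 else d j) ^ 2
      = ∑ j ∈ Finset.Icc (k + 1) n, ((List.ofFn d).getD (j - 1) 0) ^ 2 := by
  set f : ℕ → ℝ := fun i => (List.ofFn d).getD i 0 ^ 2
  have hf : ∀ i ≥ r, f i = 0 := fun i hi => by simp [f, not_lt.2 hi]
  calc ∑ j : Fin r, (if (j : ℕ) < k then 0 else d j) ^ 2
      = ∑ i ∈ Finset.range r, if k ≤ i then f i else 0 := by
        rw [← Fin.sum_univ_eq_sum_range]
        refine Finset.sum_congr rfl fun j _ => ?_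
        by_cases hjk : (j : ℕ) < k <;> simp [f, hjk]
    _ = ∑ i ∈ Finset.range n, if k ≤ i then f i else 0 := by
        refine Finset.sum_subset (Finset.range_subset_range.2 hrn) fun i _ hir => ?_
        simp [hf i (by simpa using hir)]
    _ = ∑ i ∈ Finset.Ico k n, f i := by
        rw [← Finset.sum_filter, Finset.range_eq_Ico, Finset.Ico_filter_le, Nat.zero_max]
    _ = ∑ j ∈ Finset.Icc (k + 1) n, f (j - 1) := by
        rw [← Finset.Ico_add_one_right_eq_Icc, ← Finset.sum_Ico_add']
        rfl

theorem gsvd_truncation_error_general {m n p r : ℕ}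
    (X : Matrix (Fin m) (Fin p) ℝ) (N : Matrix (Fin p) (Fin p) ℝ)
    (hN : Xᵀ * X = Nᵀ * N)
    (B0 : Matrix (Fin p) (Fin n) ℝ)
    (U : Matrix (Fin p) (Fin r) ℝ) (V : Matrix (Fin n) (Fin r) ℝ) (d : Fin r → ℝ)
    (hU : Uᵀ * (Xᵀ * X) * U = 1) (hV : Vᵀ * V = 1)
    (hd0 : ∀ j, 0 ≤ d j) (hmono : ∀ i j : Fin r, i ≤ j → d j ≤ d i)
    (hGSVD : N * B0 = N * (U * Matrix.diagonal d * Vᵀ))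
    (k : ℕ) :
    frobSq (X * B0 - X * (U * Matrix.diagonal (fun j : Fin r => if (j : ℕ) < k then d j else 0) * Vᵀ))
      = ∑ j ∈ Finset.Icc (k + 1) n, (sv (X * B0) j) ^ 2 := by
  have hXB : X * B0 = X * (U * diagonal d * Vᵀ) := mul_eq_mul_of_transpose_mul_self_eq hN hGSVD
  have htail : X * B0 - X * (U * diagonal (fun j : Fin r => if (j : ℕ) < k then d j else 0) * Vᵀ)
      = X * (U * diagonal (fun j : Fin r => if (j : ℕ) < k then 0 else d j) * Vᵀ) := by
    rw [hXB, ← Matrix.mul_sub, ← Matrix.sub_mul, ← Matrix.mul_sub, diagonal_sub]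
    congr
    ext j
    split_ifs <;> simp
  have hrn : r ≤ n := by simpa using card_le_of_transpose_mul_self_eq_one hV
  rw [htail, frobSq_mul_diagonal_mul_transpose hU hV, sum_sq_ite_lt_eq_sum_Icc_sq_getD hrn, hXB]
  simp only [sv_mul_diagonal_mul_transpose hU hV hd0 hmono]

/-- Lemma 14: for the GSVD of B₀ under the metric M = XᵀX = NᵀN, the rank-k truncation
B_k satisfies ‖XB₀ − XB_k‖_F² = Σ_{j>k} d_j²(XB₀). -/
theorem gsvd_truncation_error {m n p r : ℕ}
    (X : Matrix (Fin m) (Fin p) ℝ) (N : Matrix (Fin p) (Fin p) ℝ)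
    (hN : Xᵀ * X = Nᵀ * N)
    (B0 : Matrix (Fin p) (Fin n) ℝ) (hr : B0.rank = r)
    (U : Matrix (Fin p) (Fin r) ℝ) (V : Matrix (Fin n) (Fin r) ℝ) (d : Fin r → ℝ)
    (hU : Uᵀ * (Xᵀ * X) * U = 1) (hV : Vᵀ * V = 1)
    (hd0 : ∀ j, 0 ≤ d j) (hmono : ∀ i j : Fin r, i ≤ j → d j ≤ d i)
    (hGSVD : N * B0 = N * (U * Matrix.diagonal d * Vᵀ))
    (k : ℕ) :
    frobSq (X * B0 - X * (U * Matrix.diagonal (fun j : Fin r => if (j : ℕ) < k then d j else 0) * Vᵀ))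
      = ∑ j ∈ Finset.Icc (k + 1) n, (sv (X * B0) j) ^ 2 :=
  gsvd_truncation_error_general X N hN B0 U V d hU hV hd0 hmono hGSVD k
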